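/- (Robustness to envelope perturbation, coefficient recovery) In the setting of the envelope-perturbation theorem, letting \hat{x}_S solve the restricted Lasso \min_x (1/2)\|\tilde{y} - B_S x\|_2^2 + \lambda\|x\|_1 with \tilde{y} = E y and y = B_S x_S^*, one has the sup-norm error bound \|\hat{x}_S - x_S^*\|_\infty \le \max_i |e_i - 1| \cdot \|(B_S^T B_S)^{-1} B_S^T\|_\infty \|y\|_\infty + \lambda \|(B_S^T B_S)^{-1}\|_\infty. In particular, any coordinate of x_S^* with absolute value exceeding this bound corresponds to a nonzero coordinate of \hat{x}_S. -/

import Mathlib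

/-!
The minimality of `x̂` along each coordinate direction gives the Lasso optimality condition
`‖B_Sᵀ (ỹ - B_S x̂)‖_∞ ≤ λ`. Since `B_Sᵀ B_S` is invertible and `B_Sᵀ y = B_Sᵀ B_S x_S^*`,
`x̂ - x_S^* = (B_Sᵀ B_S)⁻¹ B_Sᵀ (ỹ - y) - (B_Sᵀ B_S)⁻¹ B_Sᵀ (ỹ - B_S x̂)`,
and `ỹ - y = (e - 1) y` coordinatewise; the bound follows from `‖A v‖_∞ ≤ ‖A‖_∞ ‖v‖_∞`.
-/

/-- The (restricted) Lasso objective `F(x) = (1/2)‖ỹ - B_S x‖₂² + λ‖x‖₁`. -/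
noncomputable def lassoObjective {N n : ℕ} (B : Matrix (Fin N) (Fin n) ℝ)
    (y : Fin N → ℝ) (lam : ℝ) (x : Fin n → ℝ) : ℝ :=
  (1 / 2) * ∑ i, (y i - B.mulVec x i) ^ 2 + lam * ∑ j, |x j|

/-- The maximum absolute row sum norm `‖A‖_∞ = max_i ∑_j |A i j|` of a matrix,
expressed as the sup norm of the vector of absolute row sums. -/
noncomputable def rowSumNorm {m n : ℕ} (A : Matrix (Fin m) (Fin n) ℝ) : ℝ :=
  ‖fun i : Fin m => ∑ j, |A i j|‖

open Filter Topology Matrix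

section RowSumNorm

attribute [local instance] Matrix.linftyOpNormedAddCommGroup

lemma rowSumNorm_eq_linfty_opNorm {m n : ℕ} (A : Matrix (Fin m) (Fin n) ℝ) :
    rowSumNorm A = ‖A‖ := by
  rw [Matrix.linfty_opNorm_def, rowSumNorm, Pi.norm_def]
  congr 2
  funext i
  ext
  simp [Finset.abs_sum_of_nonneg]

lemma norm_mulVec_le_rowSumNorm_mul {m n : ℕ} (A : Matrix (Fin m) (Fin n) ℝ) (v : Fin n → ℝ) :
    ‖A *ᵥ v‖ ≤ rowSumNorm A * ‖v‖ :=
  rowSumNorm_eq_linfty_opNorm A ▸ Matrix.linfty_opNorm_mulVec A v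

lemma rowSumNorm_nonneg {m n : ℕ} (A : Matrix (Fin m) (Fin n) ℝ) : 0 ≤ rowSumNorm A :=
  norm_nonneg _

end RowSumNorm

lemma Matrix.isUnit_of_rank_eq_card {m K : Type*} [Fintype m] [DecidableEq m] [Field K]
    {A : Matrix m m K} (h : A.rank = Fintype.card m) : IsUnit A := by
  refine Matrix.mulVec_surjective_iff_isUnit.mp fun v => ?_
  have : LinearMap.range A.mulVecLin = ⊤ :=
    Submodule.eq_top_of_finrank_eq (by rw [Module.finrank_fintype_fun_eq_card]; exact h)
  exact LinearMap.range_eq_top.mp this v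

lemma le_of_forall_pos_mul_le_add_sq {s l c : ℝ} (h : ∀ t > 0, t * s ≤ t * l + c * t ^ 2) :
    s ≤ l := by
  have hlim : Tendsto (fun t : ℝ => l + c * t) (𝓝[>] 0) (𝓝 l) := by
    have : Continuous fun t : ℝ => l + c * t := by fun_prop
    simpa using (this.tendsto 0).mono_left nhdsWithin_le_nhds
  refine ge_of_tendsto hlim ?_
  filter_upwards [self_mem_nhdsWithin] with t (ht : 0 < t)
  have hst := h t ht
  nlinarith

lemma abs_le_of_forall_mul_le_abs_add_sq {s l c : ℝ}
    (h : ∀ t, t * s ≤ l * |t| + c * t ^ 2) : |s| ≤ l := by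
  refine abs_le.mpr ⟨?_, ?_⟩
  · have : -s ≤ l := le_of_forall_pos_mul_le_add_sq (c := c) fun t ht => by
      have := h (-t); rw [abs_neg, abs_of_pos ht] at this; nlinarith
    linarith
  · exact le_of_forall_pos_mul_le_add_sq (c := c) fun t ht => by
      have := h t; rw [abs_of_pos ht] at this; nlinarith

section Lasso

variable {N n : ℕ} (B : Matrix (Fin N) (Fin n) ℝ) (y : Fin N → ℝ) (lam : ℝ) (x : Fin n → ℝ)

lemma lassoObjective_add_single (j : Fin n) (t : ℝ) :
    lassoObjective B y lam (x + Pi.single j t) = lassoObjective B y lam x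
      - t * (Bᵀ *ᵥ (y - B *ᵥ x)) j + (∑ i, B i j ^ 2) / 2 * t ^ 2
      + lam * (|x j + t| - |x j|) := by
  have hquad : ∑ i, (y i - (B *ᵥ (x + Pi.single j t)) i) ^ 2 = ∑ i, (y i - (B *ᵥ x) i) ^ 2
      - 2 * t * (Bᵀ *ᵥ (y - B *ᵥ x)) j + (∑ i, B i j ^ 2) * t ^ 2 := by
    have hcol : ∀ i, (B *ᵥ Pi.single j t) i = B i j * t := fun i => by
      simp [mulVec_single, mul_comm]
    simp only [mulVec_add, hcol, Pi.add_apply, mulVec_transpose, vecMul, dotProduct, Pi.sub_apply,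
      Finset.mul_sum, Finset.sum_mul, ← Finset.sum_sub_distrib, ← Finset.sum_add_distrib]
    exact Finset.sum_congr rfl fun i _ => by ring
  have hl1norm : ∑ k, |(x + Pi.single j t : Fin n → ℝ) k| = ∑ k, |x k| + (|x j + t| - |x j|) := by
    rw [← sub_eq_iff_eq_add', ← Finset.sum_sub_distrib,
      Fintype.sum_eq_single j fun k hk => by simp [hk]]
    simp
  rw [lassoObjective, lassoObjective, hquad, hl1norm]
  ring

lemma abs_transpose_mulVec_residual_le (hlam : 0 ≤ lam)
    (hmin : ∀ x', lassoObjective B y lam x ≤ lassoObjective B y lam x') (j : Fin n) :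
    |(Bᵀ *ᵥ (y - B *ᵥ x)) j| ≤ lam := by
  refine abs_le_of_forall_mul_le_abs_add_sq (c := (∑ i, B i j ^ 2) / 2) fun t => ?_
  have hdescent := hmin (x + Pi.single j t)
  rw [lassoObjective_add_single] at hdescent
  have habs : |x j + t| - |x j| ≤ |t| := by linarith [abs_add_le (x j) t]
  nlinarith [mul_le_mul_of_nonneg_left habs hlam]

lemma norm_transpose_mulVec_residual_le (hlam : 0 ≤ lam)
    (hmin : ∀ x', lassoObjective B y lam x ≤ lassoObjective B y lam x') :
    ‖Bᵀ *ᵥ (y - B *ᵥ x)‖ ≤ lam :=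
  (pi_norm_le_iff_of_nonneg hlam).mpr fun j =>
    abs_transpose_mulVec_residual_le B y lam x hlam hmin j

end Lasso

lemma Matrix.sub_eq_of_isUnit_det_transpose_mul_self {m n K : Type*} [Fintype m] [Fintype n]
    [DecidableEq n] [CommRing K] (B : Matrix m n K) (h : IsUnit (Bᵀ * B).det)
    (y : m → K) (x x' : n → K) :
    x - x' = ((Bᵀ * B)⁻¹ * Bᵀ) *ᵥ (y - B *ᵥ x') - (Bᵀ * B)⁻¹ *ᵥ (Bᵀ *ᵥ (y - B *ᵥ x)) := by
  rw [← mulVec_mulVec, ← mulVec_sub, ← mulVec_sub, sub_sub_sub_cancel_left, ← mulVec_sub,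
    mulVec_mulVec, mulVec_mulVec, Matrix.mul_assoc, nonsing_inv_mul _ h, one_mulVec]

/-- Robustness to envelope perturbation (coefficient recovery).  Let `B_S` have
full column rank, `y = B_S x_S^*`, `ỹ = E y` with `E = diag(e)`, and let `x̂_S`
minimize the restricted Lasso `(1/2)‖ỹ - B_S x‖₂² + λ‖x‖₁`.  Then
`‖x̂_S - x_S^*‖_∞ ≤ max_i |e_i - 1| · ‖(B_Sᵀ B_S)⁻¹ B_Sᵀ‖_∞ ‖y‖_∞
  + λ ‖(B_Sᵀ B_S)⁻¹‖_∞`,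
and any coordinate of `x_S^*` whose absolute value exceeds this bound corresponds
to a nonzero coordinate of `x̂_S`. -/
theorem lasso_envelope_robust_recovery
    {N n : ℕ} (BS : Matrix (Fin N) (Fin n) ℝ)
    (hrank : BS.rank = n)
    (xSstar : Fin n → ℝ) (y : Fin N → ℝ) (hy : y = BS.mulVec xSstar)
    (e : Fin N → ℝ) (ytilde : Fin N → ℝ) (hyt : ytilde = fun i => e i * y i)
    (lam : ℝ) (hlam : 0 < lam)
    (xhat : Fin n → ℝ)
    (hmin : ∀ x, lassoObjective BS ytilde lam xhat ≤ lassoObjective BS ytilde lam x) :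
    ‖xhat - xSstar‖
      ≤ ‖fun i => e i - 1‖ * (rowSumNorm ((BS.transpose * BS)⁻¹ * BS.transpose) * ‖y‖)
        + lam * rowSumNorm (BS.transpose * BS)⁻¹ ∧
    ∀ j : Fin n,
      ‖fun i => e i - 1‖ * (rowSumNorm ((BS.transpose * BS)⁻¹ * BS.transpose) * ‖y‖)
          + lam * rowSumNorm (BS.transpose * BS)⁻¹ < |xSstar j| →
        xhat j ≠ 0 := by
  have hdet : IsUnit (BSᵀ * BS).det := (isUnit_iff_isUnit_det _).mp <|
    isUnit_of_rank_eq_card (by rw [rank_transpose_mul_self, hrank, Fintype.card_fin])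
  have hpert : ytilde - BS *ᵥ xSstar = (fun i => e i - 1) * y := by
    funext i; simp only [hyt, hy, Pi.sub_apply, Pi.mul_apply]; ring
  have hbound : ‖xhat - xSstar‖
      ≤ ‖fun i => e i - 1‖ * (rowSumNorm ((BSᵀ * BS)⁻¹ * BSᵀ) * ‖y‖)
        + lam * rowSumNorm (BSᵀ * BS)⁻¹ := by
    rw [sub_eq_of_isUnit_det_transpose_mul_self BS hdet ytilde xhat xSstar, hpert]
    calc _ ≤ rowSumNorm ((BSᵀ * BS)⁻¹ * BSᵀ) * ‖(fun i => e i - 1) * y‖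
          + rowSumNorm (BSᵀ * BS)⁻¹ * ‖BSᵀ *ᵥ (ytilde - BS *ᵥ xhat)‖ :=
          (norm_sub_le _ _).trans <| add_le_add (norm_mulVec_le_rowSumNorm_mul _ _)
            (norm_mulVec_le_rowSumNorm_mul _ _)
      _ ≤ rowSumNorm ((BSᵀ * BS)⁻¹ * BSᵀ) * (‖fun i => e i - 1‖ * ‖y‖)
          + rowSumNorm (BSᵀ * BS)⁻¹ * lam := by
          have hkkt := norm_transpose_mulVec_residual_le BS ytilde lam xhat hlam.le hmin
          gcongr
          · exact rowSumNorm_nonneg _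
          · exact norm_mul_le _ _
          · exact rowSumNorm_nonneg _
      _ = _ := by ring
  refine ⟨hbound, fun j hj hxj => hj.not_ge <| hbound.trans' ?_⟩
  simpa [hxj] using norm_le_pi_norm (xhat - xSstar) j
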